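/- Let H₁ and H₂ be complex Hilbert spaces, let D₁ ⊆ H₁ and D₂ ⊆ H₂ be subspaces, let Q₁ and Q₂ be nonnegative Hermitian sesquilinear forms with domains D₁ and D₂ respectively, and let T : D₁ → D₂ be a linear map. Let k be a positive integer such that D₁ contains a k-dimensional subspace (so λ_k(Q₁, D₁) < ∞), and let α_k, β_k be real numbers with 0 < α_k < 1/(2k) and β_k > 0. Suppose that for every k-dimensional subspace L ⊆ D₁ and every u ∈ L one has ‖Tu‖²_{H₂} ≥ (1 − kα_k)·‖u‖²_{H₁} and Q₂(Tu, Tu) ≤ Q₁(u, u) + kβ_k·‖u‖²_{H₁}. Then λ_k(Q₂, D₂) ≤ λ_k(Q₁, D₁) + 2k(α_k·λ_k(Q₁, D₁) + β_k). -/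

import Mathlib

open scoped ComplexInnerProductSpace ENNReal

/-- The supremum of the Rayleigh quotient `Q(u,u)/‖u‖²` over nonzero `u` in a subspace `L`. -/
noncomputable def rayleighSup {H : Type*} [NormedAddCommGroup H] [InnerProductSpace ℂ H]
    (Q : H → H → ℂ) (L : Submodule ℂ H) : ℝ≥0∞ :=
  ⨆ u ∈ {u : H | u ∈ L ∧ u ≠ 0}, ENNReal.ofReal ((Q u u).re / ‖u‖ ^ 2)

/-- The k-th variational eigenvalue of a form `Q` with domain `D`:
the infimum, over all `k`-dimensional subspaces `L ⊆ D`, of the sup of the Rayleigh quotient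
over `L`; the infimum of the empty set is `+∞`. -/
noncomputable def varEig {H : Type*} [NormedAddCommGroup H] [InnerProductSpace ℂ H]
    (Q : H → H → ℂ) (D : Submodule ℂ H) (k : ℕ) : ℝ≥0∞ :=
  ⨅ L ∈ {L : Submodule ℂ H | L ≤ D ∧ Module.finrank ℂ ↥L = k}, rayleighSup Q L

/-- `Q` is a nonnegative Hermitian sesquilinear form with domain the subspace `D`:
it is linear in the first argument (and hence, being Hermitian, conjugate-linear in the
second), Hermitian, and `Q(u,u) ≥ 0` on `D`. -/
structure IsNonnegHermitianFormOn {H : Type*} [NormedAddCommGroup H] [InnerProductSpace ℂ H]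
    (Q : H → H → ℂ) (D : Submodule ℂ H) : Prop where
  add_left : ∀ u v w, u ∈ D → v ∈ D → w ∈ D → Q (u + v) w = Q u w + Q v w
  smul_left : ∀ (c : ℂ) (u v : H), u ∈ D → v ∈ D → Q (c • u) v = c * Q u v
  hermitian : ∀ u v, u ∈ D → v ∈ D → Q u v = starRingEnd ℂ (Q v u)
  nonneg : ∀ u, u ∈ D → 0 ≤ (Q u u).re

/-!
Take a `k`-dimensional `L ⊆ D₁` whose Rayleigh quotients are at most `M`, for `M` just above
`λ_k(Q₁, D₁)`. The lower bound on `‖Tu‖` makes `T` injective on `L`, so `T(L) ⊆ D₂` is again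
`k`-dimensional, and on it the Rayleigh quotient of `Q₂` is at most
`(M + kβ) / (1 - kα) ≤ M + 2k(αM + β)`, the last step because `kα < 1/2`.
Letting `M` decrease to `λ_k(Q₁, D₁)` gives the claim.
-/

open Module

lemma div_one_sub_le_add_two_mul {a b M : ℝ} (ha : 0 ≤ a) (ha' : 2 * a < 1) (hb : 0 ≤ b)
    (hM : 0 ≤ M) : (M + b) / (1 - a) ≤ M + 2 * (a * M + b) := by
  rw [div_le_iff₀ (by linarith)]
  -- `(1 - a) (M + 2 (aM + b)) - (M + b) = (1 - 2a) (aM + b)`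
  nlinarith [mul_nonneg (by linarith : 0 ≤ 1 - 2 * a) (by positivity : 0 ≤ a * M + b)]

lemma ENNReal.le_ofReal_of_forall_gt {x : ℝ≥0∞} {g : ℝ → ℝ} {m : ℝ}
    (hg : ContinuousWithinAt g (Set.Ioi m) m) (h : ∀ M > m, x ≤ ENNReal.ofReal (g M)) :
    x ≤ ENNReal.ofReal (g m) :=
  ge_of_tendsto ((ENNReal.continuous_ofReal.tendsto _).comp hg)
    (eventually_nhdsWithin_of_forall h)

lemma LinearMap.injective_of_mul_norm_sq_le {E F : Type*} [NormedAddCommGroup E]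
    [NormedAddCommGroup F] [Module ℂ E] [Module ℂ F] (S : E →ₗ[ℂ] F) {c : ℝ} (hc : 0 < c)
    (hS : ∀ u, c * ‖u‖ ^ 2 ≤ ‖S u‖ ^ 2) : Function.Injective S := by
  refine LinearMap.ker_eq_bot.1 (LinearMap.ker_eq_bot'.2 fun u hu => ?_)
  have h := hS u
  rw [hu, norm_zero, zero_pow two_ne_zero] at h
  have : ‖u‖ ^ 2 = 0 := le_antisymm (nonpos_of_mul_nonpos_right h hc) (by positivity)
  simpa using this

section Rayleigh

variable {H : Type*} [NormedAddCommGroup H] [InnerProductSpace ℂ H] {Q : H → H → ℂ}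

lemma rayleighSup_le_ofReal {L : Submodule ℂ H} {c : ℝ}
    (h : ∀ u ∈ L, u ≠ 0 → (Q u u).re / ‖u‖ ^ 2 ≤ c) : rayleighSup Q L ≤ ENNReal.ofReal c :=
  iSup₂_le fun u ⟨huL, hu⟩ => ENNReal.ofReal_le_ofReal (h u huL hu)

lemma re_le_mul_norm_sq_of_rayleighSup_le {L : Submodule ℂ H} {c : ℝ} (hc : 0 ≤ c)
    (h : rayleighSup Q L ≤ ENNReal.ofReal c) {u : H} (huL : u ∈ L) (hu : u ≠ 0) :
    (Q u u).re ≤ c * ‖u‖ ^ 2 := by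
  have hquot : ENNReal.ofReal ((Q u u).re / ‖u‖ ^ 2) ≤ ENNReal.ofReal c :=
    (le_iSup₂ (f := fun (u : H) (_ : u ∈ {u : H | u ∈ L ∧ u ≠ 0}) =>
      ENNReal.ofReal ((Q u u).re / ‖u‖ ^ 2)) u ⟨huL, hu⟩).trans h
  rwa [ENNReal.ofReal_le_ofReal_iff hc, div_le_iff₀ (by positivity)] at hquot

lemma exists_rayleighSup_lt_of_varEig_lt {D : Submodule ℂ H} {k : ℕ} {a : ℝ≥0∞}
    (h : varEig Q D k < a) : ∃ L ≤ D, finrank ℂ L = k ∧ rayleighSup Q L < a := by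
  simpa only [varEig, iInf_lt_iff, Set.mem_ofPred_eq, exists_prop, and_assoc] using h

lemma varEig_le_rayleighSup_range {E : Type*} [AddCommGroup E] [Module ℂ E] {D : Submodule ℂ H}
    (S : E →ₗ[ℂ] H) (hS : Function.Injective S) (hSD : ∀ u, S u ∈ D) :
    varEig Q D (finrank ℂ E) ≤ rayleighSup Q (LinearMap.range S) :=
  iInf₂_le _ ⟨by rintro _ ⟨u, rfl⟩; exact hSD u, (LinearEquiv.ofInjective S hS).finrank_eq.symm⟩

lemma rayleighSup_range_le {E : Type*} [NormedAddCommGroup E] [Module ℂ E] (S : E →ₗ[ℂ] H)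
    {a c : ℝ} (ha : 0 ≤ a) (hc : 0 < c) (hnorm : ∀ u, c * ‖u‖ ^ 2 ≤ ‖S u‖ ^ 2)
    (hQ : ∀ u, u ≠ 0 → (Q (S u) (S u)).re ≤ a * ‖u‖ ^ 2) :
    rayleighSup Q (LinearMap.range S) ≤ ENNReal.ofReal (a / c) := by
  refine rayleighSup_le_ofReal ?_
  rintro _ ⟨u, rfl⟩ hSu
  have hu : u ≠ 0 := by rintro rfl; exact hSu (map_zero S)
  have hu2 : 0 < ‖u‖ ^ 2 := by positivity
  calc (Q (S u) (S u)).re / ‖S u‖ ^ 2 ≤ a * ‖u‖ ^ 2 / (c * ‖u‖ ^ 2) :=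
        div_le_div₀ (by positivity) (hQ u hu) (by positivity) (hnorm u)
    _ = a / c := mul_div_mul_right _ _ hu2.ne'

end Rayleigh

lemma varEig_finrank_le_of_map {H₁ H₂ : Type*} [NormedAddCommGroup H₁]
    [InnerProductSpace ℂ H₁] [NormedAddCommGroup H₂] [InnerProductSpace ℂ H₂]
    {Q₁ : H₁ → H₁ → ℂ} {Q₂ : H₂ → H₂ → ℂ} {L : Submodule ℂ H₁} {D : Submodule ℂ H₂}
    (S : L →ₗ[ℂ] H₂) (hSD : ∀ u, S u ∈ D) {M b c : ℝ} (hM : 0 ≤ M) (hb : 0 ≤ b) (hc : 0 < c)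
    (hLM : rayleighSup Q₁ L ≤ ENNReal.ofReal M)
    (hnorm : ∀ u, c * ‖u‖ ^ 2 ≤ ‖S u‖ ^ 2)
    (hQ : ∀ u : L, (Q₂ (S u) (S u)).re ≤ (Q₁ u u).re + b * ‖u‖ ^ 2) :
    varEig Q₂ D (finrank ℂ L) ≤ ENNReal.ofReal ((M + b) / c) := by
  have hQM (u : L) (hu : u ≠ 0) : (Q₂ (S u) (S u)).re ≤ (M + b) * ‖u‖ ^ 2 :=
    calc (Q₂ (S u) (S u)).re ≤ (Q₁ u u).re + b * ‖u‖ ^ 2 := hQ u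
      _ ≤ (M + b) * ‖u‖ ^ 2 := by
        rw [add_mul]
        gcongr
        exact re_le_mul_norm_sq_of_rayleighSup_le hM hLM u.2 (by simpa using hu)
  calc varEig Q₂ D (finrank ℂ L) ≤ rayleighSup Q₂ (LinearMap.range S) :=
        varEig_le_rayleighSup_range S (S.injective_of_mul_norm_sq_le hc hnorm) hSD
    _ ≤ ENNReal.ofReal ((M + b) / c) := rayleighSup_range_le S (by positivity) hc hnorm hQM

theorem varEig_le_of_transition_subspace_general
    {H₁ H₂ : Type*} [NormedAddCommGroup H₁] [InnerProductSpace ℂ H₁]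
    [NormedAddCommGroup H₂] [InnerProductSpace ℂ H₂]
    (D₁ : Submodule ℂ H₁) (D₂ : Submodule ℂ H₂)
    (Q₁ : H₁ → H₁ → ℂ) (Q₂ : H₂ → H₂ → ℂ)
    (T : D₁ →ₗ[ℂ] H₂) (hT : ∀ u : D₁, T u ∈ D₂)
    (k : ℕ)
    (αk βk : ℝ) (hα : 0 < αk) (hα' : αk < 1 / (2 * k)) (hβ : 0 < βk)
    (hyp : ∀ L : Submodule ℂ H₁, L ≤ D₁ → Module.finrank ℂ ↥L = k →
      ∀ (u : H₁) (hu : u ∈ D₁), u ∈ L →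
        (1 - k * αk) * ‖u‖ ^ 2 ≤ ‖T ⟨u, hu⟩‖ ^ 2 ∧
        (Q₂ (T ⟨u, hu⟩) (T ⟨u, hu⟩)).re ≤ (Q₁ u u).re + k * βk * ‖u‖ ^ 2) :
    varEig Q₂ D₂ k ≤ varEig Q₁ D₁ k +
      ENNReal.ofReal (2 * k * (αk * (varEig Q₁ D₁ k).toReal + βk)) := by
  set lam := varEig Q₁ D₁ k
  rcases eq_or_ne lam ⊤ with hlam | hlam
  · simp [hlam]
  have hkα : 2 * (k * αk) < 1 := by
    rcases k.eq_zero_or_pos with rfl | hk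
    · simp
    · rw [lt_div_iff₀ (by positivity)] at hα'
      linarith
  rw [← ENNReal.ofReal_toReal hlam, ← ENNReal.ofReal_add ENNReal.toReal_nonneg (by positivity),
    ENNReal.toReal_ofReal ENNReal.toReal_nonneg]
  refine ENNReal.le_ofReal_of_forall_gt (g := fun M => M + 2 * k * (αk * M + βk))
    (by fun_prop : Continuous _).continuousWithinAt fun M hM => ?_
  have hM0 : 0 ≤ M := ENNReal.toReal_nonneg.trans hM.le
  obtain ⟨L, hLD, hLk, hLM⟩ :=
    exists_rayleighSup_lt_of_varEig_lt ((ENNReal.lt_ofReal_iff_toReal_lt hlam).2 hM)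
  have hTL (u : L) := hyp L hLD hLk u (hLD u.2) u.2
  calc varEig Q₂ D₂ k = varEig Q₂ D₂ (finrank ℂ L) := by rw [hLk]
    _ ≤ ENNReal.ofReal ((M + k * βk) / (1 - k * αk)) :=
        varEig_finrank_le_of_map (T ∘ₗ Submodule.inclusion hLD) (fun _ => hT _) hM0
          (by positivity) (by linarith) hLM.le (fun u => (hTL u).1) (fun u => (hTL u).2)
    _ ≤ ENNReal.ofReal (M + 2 * k * (αk * M + βk)) := by
      refine ENNReal.ofReal_le_ofReal ?_
      convert div_one_sub_le_add_two_mul (b := k * βk) (by positivity) hkα (by positivity) hM0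
        using 1
      ring

/-- The variant of Lemma 2.2 of the paper (Remark 2, condition (12)): comparing variational
eigenvalues via a transition operator `T`, under the subspace hypothesis. -/
theorem varEig_le_of_transition_subspace
    {H₁ H₂ : Type*} [NormedAddCommGroup H₁] [InnerProductSpace ℂ H₁] [CompleteSpace H₁]
    [NormedAddCommGroup H₂] [InnerProductSpace ℂ H₂] [CompleteSpace H₂]
    (D₁ : Submodule ℂ H₁) (D₂ : Submodule ℂ H₂)
    (Q₁ : H₁ → H₁ → ℂ) (Q₂ : H₂ → H₂ → ℂ)
    (hQ₁ : IsNonnegHermitianFormOn Q₁ D₁) (hQ₂ : IsNonnegHermitianFormOn Q₂ D₂)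
    (T : D₁ →ₗ[ℂ] H₂) (hT : ∀ u : D₁, T u ∈ D₂)
    (k : ℕ) (hk : 0 < k)
    (hdim : ∃ L : Submodule ℂ H₁, L ≤ D₁ ∧ Module.finrank ℂ ↥L = k)
    (αk βk : ℝ) (hα : 0 < αk) (hα' : αk < 1 / (2 * k)) (hβ : 0 < βk)
    (hyp : ∀ L : Submodule ℂ H₁, L ≤ D₁ → Module.finrank ℂ ↥L = k →
      ∀ (u : H₁) (hu : u ∈ D₁), u ∈ L →
        (1 - k * αk) * ‖u‖ ^ 2 ≤ ‖T ⟨u, hu⟩‖ ^ 2 ∧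
        (Q₂ (T ⟨u, hu⟩) (T ⟨u, hu⟩)).re ≤ (Q₁ u u).re + k * βk * ‖u‖ ^ 2) :
    varEig Q₂ D₂ k ≤ varEig Q₁ D₁ k +
      ENNReal.ofReal (2 * k * (αk * (varEig Q₁ D₁ k).toReal + βk)) :=
  varEig_le_of_transition_subspace_general D₁ D₂ Q₁ Q₂ T hT k αk βk hα hα' hβ hyp
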